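/- arXiv:1406.3339 — 6 statements merged into one kernel-verified Lean document; each statement's English description precedes it below -/
import Mathlib

section
/- Let Z be an integrable real-valued random variable on a probability space, α ∈ (0,1), λ ≥ 0, ν ∈ ℝ, and q ∈ [0,1]. Define g = λ − (λ/(1−α))·(P(Z > ν) + q·P(Z = ν)). Then g is a subgradient at ν of the convex function f(ν') = λ·(ν' + (1−α)⁻¹·E[(Z − ν')⁺]); that is, for every ν' ∈ ℝ, f(ν') ≥ f(ν) + g·(ν' − ν). -/
/-!
For every outcome `z`, the map `ν ↦ (z - ν)⁺` is convex with subgradient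
`-(1{z > ν} + q·1{z = ν})` at `ν` for any `q ∈ [0, 1]`: the kink at `z = ν` admits every slope
in `[-1, 0]`. Integrating this pointwise subgradient inequality against `P` gives a subgradient of
`ν ↦ E[(Z - ν)⁺]`, and scaling by `λ/(1-α) ≥ 0` and adding the linear term `λν` gives the claim.
-/

open MeasureTheory Set

theorem integral_indicator_one₀ {Ω : Type*} [MeasurableSpace Ω] {μ : Measure Ω} {s : Set Ω}
    (hs : NullMeasurableSet s μ) : ∫ ω, s.indicator 1 ω ∂μ = μ.real s := by
  rw [integral_indicator₀ hs, Pi.one_def, setIntegral_const, smul_eq_mul, mul_one]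

theorem max_sub_zero_le_max_sub_zero_add {q : ℝ} (hq : q ∈ Icc (0 : ℝ) 1) (ν ν' z : ℝ) :
    max (z - ν) 0 ≤
      max (z - ν') 0 + ((Ioi ν).indicator 1 z + q * ({ν} : Set ℝ).indicator 1 z) * (ν' - ν) := by
  obtain ⟨hq0, hq1⟩ := hq
  rcases lt_trichotomy z ν with h | rfl | h
  · simp [indicator_of_notMem, h.not_gt, h.ne, max_eq_right (sub_nonpos.2 h.le)]
  · simp only [sub_self, max_self, indicator_of_notMem self_notMem_Ioi, mem_singleton,
      indicator_of_mem, Pi.one_apply, zero_add, mul_one]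
    nlinarith [le_max_left (z - ν') 0, le_max_right (z - ν') 0]
  · simp [indicator_of_notMem, h, h.ne', max_eq_left (sub_nonneg.2 h.le)]
    linarith [le_max_left (z - ν') 0]

theorem integral_max_sub_zero_le {Ω : Type*} [MeasurableSpace Ω] {μ : Measure Ω}
    [IsFiniteMeasure μ] {Z : Ω → ℝ} (hZ : Integrable Z μ) {q : ℝ} (hq : q ∈ Icc (0 : ℝ) 1)
    (ν ν' : ℝ) :
    ∫ ω, max (Z ω - ν) 0 ∂μ ≤
      ∫ ω, max (Z ω - ν') 0 ∂μ +
        (μ.real {ω | Z ω > ν} + q * μ.real {ω | Z ω = ν}) * (ν' - ν) := by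
  have hgt : NullMeasurableSet (Z ⁻¹' Ioi ν) μ :=
    hZ.aemeasurable.nullMeasurableSet_preimage measurableSet_Ioi
  have heq : NullMeasurableSet (Z ⁻¹' {ν}) μ :=
    hZ.aemeasurable.nullMeasurableSet_preimage (measurableSet_singleton ν)
  have hgt_int : Integrable ((Z ⁻¹' Ioi ν).indicator (1 : Ω → ℝ)) μ :=
    (integrable_const 1).indicator₀ hgt
  have heq_int : Integrable ((Z ⁻¹' {ν}).indicator (1 : Ω → ℝ)) μ :=
    (integrable_const 1).indicator₀ heq
  have hslope_int : Integrable
      (fun ω => (Z ⁻¹' Ioi ν).indicator 1 ω + q * (Z ⁻¹' {ν}).indicator 1 ω) μ :=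
    hgt_int.add (heq_int.const_mul q)
  have hpos_int (t : ℝ) : Integrable (fun ω => max (Z ω - t) 0) μ :=
    (hZ.sub (integrable_const t)).pos_part
  calc ∫ ω, max (Z ω - ν) 0 ∂μ
      ≤ ∫ ω, max (Z ω - ν') 0 +
          ((Z ⁻¹' Ioi ν).indicator 1 ω + q * (Z ⁻¹' {ν}).indicator 1 ω) * (ν' - ν) ∂μ :=
        integral_mono (hpos_int ν) ((hpos_int ν').add (hslope_int.mul_const _)) fun ω =>
          max_sub_zero_le_max_sub_zero_add hq ν ν' (Z ω)
    _ = _ := by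
      rw [integral_add (hpos_int ν') (hslope_int.mul_const _), integral_mul_const,
        integral_add hgt_int (heq_int.const_mul q), integral_const_mul,
        integral_indicator_one₀ hgt, integral_indicator_one₀ heq]
      rfl

/-- For an integrable random variable `Z`, confidence level `α ∈ (0,1)`,
`λ ≥ 0`, `ν ∈ ℝ` and `q ∈ [0,1]`, the quantity
`g = λ − (λ/(1−α))·(P(Z > ν) + q·P(Z = ν))` is a subgradient at `ν` of the convex
function `ν' ↦ λ·(ν' + (1−α)⁻¹·E[(Z − ν')⁺])`. -/
theorem stmt1 {Ω : Type*} [MeasurableSpace Ω] (P : Measure Ω) [IsProbabilityMeasure P]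
    (Z : Ω → ℝ) (hZ : Integrable Z P) (α : ℝ) (hα : α ∈ Set.Ioo (0 : ℝ) 1)
    (lam : ℝ) (hlam : 0 ≤ lam) (ν q : ℝ) (hq : q ∈ Set.Icc (0 : ℝ) 1) :
    ∀ ν' : ℝ,
      lam * (ν' + (1 - α)⁻¹ * ∫ ω, max (Z ω - ν') 0 ∂P) ≥
        lam * (ν + (1 - α)⁻¹ * ∫ ω, max (Z ω - ν) 0 ∂P) +
          (lam - lam / (1 - α) *
              ((P {ω | Z ω > ν}).toReal + q * (P {ω | Z ω = ν}).toReal)) * (ν' - ν) := by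
  intro ν'
  have hkey := integral_max_sub_zero_le hZ hq ν ν'
  rw [measureReal_def, measureReal_def] at hkey
  have hscale : 0 ≤ lam / (1 - α) := div_nonneg hlam (sub_nonneg.2 hα.2.le)
  linear_combination mul_le_mul_of_nonneg_left hkey hscale
end

section
/- Let S and A be finite sets, γ ∈ (0,1), P : S × A × S → ℝ with P(y|x,a) ≥ 0 and Σ_y P(y|x,a) = 1, and c : S × A → ℝ. Let θ ↦ μ(a|x;θ) (θ ∈ ℝ^κ) be differentiable with μ(a|x;θ) ≥ 0 and Σ_a μ(a|x;θ) = 1 for all x, θ. Define the induced transition matrix P_θ(x,y) = Σ_a μ(a|x;θ)P(y|x,a), cost c_θ(x) = Σ_a μ(a|x;θ)c(x,a), value function V^θ = (I − γP_θ)⁻¹ c_θ, and action-value function Q^θ(x,a) = c(x,a) + γ Σ_y P(y|x,a) V^θ(y). Then for every x⁰ ∈ S, θ ↦ V^θ(x⁰) is differentiable and ∇_θ V^θ(x⁰) = Σ_{k=0}^{∞} γᵏ Σ_{x∈S} (P_θᵏ)(x⁰,x) Σ_{a∈A} ∇_θ μ(a|x;θ) · Q^θ(x,a); moreover the same formula holds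 with Q^θ(x,a) replaced by the advantage A^θ(x,a) = Q^θ(x,a) − V^θ(x). -/
/-!
The policy matrix `P_θ` is row-stochastic, so `‖γ P_θ‖ < 1` in the `ℓ∞` operator norm: `1 - γ P_θ`
is invertible with Neumann series `∑ γᵏ P_θᵏ`, and by Cramer's rule `V^θ = (1 - γ P_θ)⁻¹ c_θ` is
differentiable. Differentiating the Bellman equation `(1 - γ P_θ) V^θ = c_θ` by the product rule
gives `(1 - γ P_θ) ∇V^θ = ∑ₐ ∇μ(a|·;θ) Q^θ(·,a)`, and inverting with the Neumann series yields
the formula. Since `∑ₐ μ(a|x;θ) = 1`, also `∑ₐ ∇μ(a|x;θ) = 0`, so subtracting the baseline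
`V^θ(x)` from `Q^θ(x,a)` does not change the gradient.
-/

open Finset
open scoped Matrix

namespace Matrix

variable {n 𝕜 E : Type*} [Fintype n] [NontriviallyNormedField 𝕜] [NormedAddCommGroup E]
  [NormedSpace 𝕜 E] {θ : E}

theorem fderiv_mulVec_apply {M : E → Matrix n n 𝕜} {v : E → n → 𝕜} {i : n}
    (hM : ∀ j, DifferentiableAt 𝕜 (fun θ => M θ i j) θ)
    (hv : ∀ j, DifferentiableAt 𝕜 (fun θ => v θ j) θ) :
    fderiv 𝕜 (fun θ => (M θ *ᵥ v θ) i) θ =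
      ∑ j, M θ i j • fderiv 𝕜 (fun θ => v θ j) θ + ∑ j, v θ j • fderiv 𝕜 (fun θ => M θ i j) θ := by
  simp only [mulVec, dotProduct]
  rw [fderiv_fun_sum fun j _ => (hM j).fun_mul (hv j), ← sum_add_distrib]
  exact sum_congr rfl fun j _ => fderiv_fun_mul (hM j) (hv j)

variable [DecidableEq n]

theorem _root_.DifferentiableAt.matrix_det {M : E → Matrix n n 𝕜}
    (hM : ∀ i j, DifferentiableAt 𝕜 (fun θ => M θ i j) θ) :
    DifferentiableAt 𝕜 (fun θ => (M θ).det) θ := by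
  simp only [det_apply']
  fun_prop

theorem _root_.DifferentiableAt.matrix_inv_mulVec_apply {M : E → Matrix n n 𝕜} {b : E → n → 𝕜}
    (hM : ∀ i j, DifferentiableAt 𝕜 (fun θ => M θ i j) θ)
    (hb : ∀ i, DifferentiableAt 𝕜 (fun θ => b θ i) θ) (hdet : (M θ).det ≠ 0) (i : n) :
    DifferentiableAt 𝕜 (fun θ => ((M θ)⁻¹ *ᵥ b θ) i) θ := by
  have hcramer (θ : E) :
      ((M θ)⁻¹ *ᵥ b θ) i = ((M θ).det)⁻¹ * ((M θ).updateCol i (b θ)).det := by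
    rw [inv_def, smul_mulVec, ← cramer_eq_adjugate_mulVec, Ring.inverse_eq_inv', Pi.smul_apply,
      cramer_apply, smul_eq_mul]
  simp only [hcramer]
  refine ((DifferentiableAt.matrix_det hM).inv hdet).mul (DifferentiableAt.matrix_det fun j k => ?_)
  simp only [updateCol_apply]
  split_ifs
  exacts [hb j, hM j k]

theorem sum_inv_apply_smul_sum_apply_smul {R F : Type*} [CommRing R] [AddCommGroup F]
    [Module R F] {M : Matrix n n R} (hM : IsUnit M.det) (w : n → F) (i : n) :
    ∑ x, M⁻¹ i x • ∑ y, M x y • w y = w i := by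
  have h : ∑ x, M⁻¹ i x • ∑ y, M x y • w y = ∑ y, (M⁻¹ * M) i y • w y := by
    simp only [smul_sum, smul_smul, mul_apply, sum_smul]
    exact sum_comm
  rw [h, nonsing_inv_mul _ hM]
  simp [one_apply]

section LinftyOp

attribute [local instance] Matrix.linftyOpNormedAddCommGroup Matrix.linftyOpNormedRing
  Matrix.linftyOpNormedAlgebra

theorem linfty_opNorm_le_one_of_mem_rowStochastic {P : Matrix n n ℝ}
    (hP : P ∈ rowStochastic ℝ n) : ‖P‖ ≤ 1 := by
  have hrow (i : n) : ∑ j, ‖P i j‖₊ = 1 := by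
    ext
    push_cast
    simp only [Real.norm_of_nonneg (nonneg_of_mem_rowStochastic hP)]
    exact sum_row_of_mem_rowStochastic hP i
  rw [linfty_opNorm_def]
  exact_mod_cast Finset.sup_le fun i _ => (hrow i).le

theorem norm_smul_lt_one_of_mem_rowStochastic {P : Matrix n n ℝ}
    (hP : P ∈ rowStochastic ℝ n) {γ : ℝ} (hγ : |γ| < 1) : ‖γ • P‖ < 1 := by
  rw [norm_smul, Real.norm_eq_abs]
  calc |γ| * ‖P‖ ≤ |γ| := mul_le_of_le_one_right (abs_nonneg γ)
        (linfty_opNorm_le_one_of_mem_rowStochastic hP)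
    _ < 1 := hγ

theorem isUnit_one_sub_smul_of_mem_rowStochastic {P : Matrix n n ℝ}
    (hP : P ∈ rowStochastic ℝ n) {γ : ℝ} (hγ : |γ| < 1) : IsUnit (1 - γ • P) :=
  isUnit_one_sub_of_norm_lt_one (norm_smul_lt_one_of_mem_rowStochastic hP hγ)

theorem hasSum_pow_mul_pow_apply_of_mem_rowStochastic {P : Matrix n n ℝ}
    (hP : P ∈ rowStochastic ℝ n) {γ : ℝ} (hγ : |γ| < 1) (i j : n) :
    HasSum (fun k : ℕ => γ ^ k * (P ^ k) i j) ((1 - γ • P)⁻¹ i j) := by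
  have h := hasSum_geom_series_inverse (γ • P) (norm_smul_lt_one_of_mem_rowStochastic hP hγ)
  rw [← nonsing_inv_eq_ringInverse] at h
  -- the `ℓ∞` operator norm induces the product topology, so the sum converges entrywise
  simpa only [smul_pow, smul_apply, smul_eq_mul] using Pi.hasSum.mp (Pi.hasSum.mp h i) j

end LinftyOp

end Matrix

section Calculus

variable {𝕜 E ι : Type*} [NontriviallyNormedField 𝕜] [NormedAddCommGroup E] [NormedSpace 𝕜 E]
  {θ : E} {s : Finset ι} {f : ι → E → 𝕜}

theorem hasFDerivAt_sum_mul_const (hf : ∀ i ∈ s, DifferentiableAt 𝕜 (f i) θ) (w : ι → 𝕜) :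
    HasFDerivAt (fun θ => ∑ i ∈ s, f i θ * w i) (∑ i ∈ s, w i • fderiv 𝕜 (f i) θ) θ :=
  HasFDerivAt.fun_sum fun i hi => (hf i hi).hasFDerivAt.mul_const (w i)

theorem sum_sub_smul_fderiv_eq_of_sum_eq_const (hf : ∀ i ∈ s, DifferentiableAt 𝕜 (f i) θ)
    {C : 𝕜} (hC : ∀ θ, ∑ i ∈ s, f i θ = C) (q : ι → 𝕜) (b : 𝕜) :
    ∑ i ∈ s, (q i - b) • fderiv 𝕜 (f i) θ = ∑ i ∈ s, q i • fderiv 𝕜 (f i) θ := by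
  have hsum : ∑ i ∈ s, fderiv 𝕜 (f i) θ = 0 := by
    rw [← fderiv_fun_sum hf]
    simp [hC]
  rw [sum_congr rfl fun i _ => sub_smul (q i) b (fderiv 𝕜 (f i) θ), sum_sub_distrib, ← smul_sum,
    hsum, smul_zero, sub_zero]

end Calculus

section PolicyGradient

variable {S A E : Type*} [Fintype A] [DecidableEq S] [NormedAddCommGroup E]
  [NormedSpace ℝ E] {P : S → A → S → ℝ} {c : S → A → ℝ} {μ : E → S → A → ℝ}
  {Pθ : E → Matrix S S ℝ} {cθ : E → S → ℝ} {V : E → S → ℝ} {γ : ℝ} {θ : E}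

theorem hasFDerivAt_one_sub_smul_apply (hPθ : ∀ θ x y, Pθ θ x y = ∑ a, μ θ x a * P x a y)
    {x : S} (hμ : ∀ a, DifferentiableAt ℝ (fun θ => μ θ x a) θ) (y : S) :
    HasFDerivAt (fun θ => (1 - γ • Pθ θ) x y)
      (-(γ • ∑ a, P x a y • fderiv ℝ (fun θ => μ θ x a) θ)) θ := by
  have h : (fun θ => (1 - γ • Pθ θ) x y) =
      fun θ => (1 : Matrix S S ℝ) x y - γ * ∑ a, μ θ x a * P x a y := by
    funext θ
    simp [hPθ]
  rw [h]
  exact ((hasFDerivAt_sum_mul_const (fun a _ => hμ a) _).const_mul γ).const_sub _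

variable [Fintype S]

theorem mem_rowStochastic_of_apply_eq_sum_mul {M : Matrix S S ℝ} {w : S → A → ℝ}
    (hM : ∀ x y, M x y = ∑ a, w x a * P x a y) (hw0 : ∀ x a, 0 ≤ w x a)
    (hw1 : ∀ x, ∑ a, w x a = 1) (hP0 : ∀ x a y, 0 ≤ P x a y) (hP1 : ∀ x a, ∑ y, P x a y = 1) :
    M ∈ Matrix.rowStochastic ℝ S := by
  refine Matrix.mem_rowStochastic_iff_sum.mpr ⟨fun x y => ?_, fun x => ?_⟩
  · rw [hM]
    exact sum_nonneg fun a _ => mul_nonneg (hw0 x a) (hP0 x a y)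
  · simp only [hM]
    rw [sum_comm]
    simp only [← mul_sum, hP1, mul_one, hw1]

theorem differentiableAt_value (hPθ : ∀ θ x y, Pθ θ x y = ∑ a, μ θ x a * P x a y)
    (hcθ : ∀ θ x, cθ θ x = ∑ a, μ θ x a * c x a) (hV : ∀ θ, V θ = (1 - γ • Pθ θ)⁻¹ *ᵥ cθ θ)
    (hμ : ∀ x a, DifferentiableAt ℝ (fun θ => μ θ x a) θ) (hdet : (1 - γ • Pθ θ).det ≠ 0)
    (y : S) : DifferentiableAt ℝ (fun θ => V θ y) θ := by
  simp only [hV]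
  refine DifferentiableAt.matrix_inv_mulVec_apply
    (fun x z => (hasFDerivAt_one_sub_smul_apply hPθ (hμ x) z).differentiableAt) (fun x => ?_) hdet y
  simp only [hcθ]
  exact (hasFDerivAt_sum_mul_const (fun a _ => hμ x a) _).differentiableAt

theorem fderiv_bellman_eq (hPθ : ∀ θ x y, Pθ θ x y = ∑ a, μ θ x a * P x a y)
    (hcθ : ∀ θ x, cθ θ x = ∑ a, μ θ x a * c x a) (hbellman : ∀ θ, (1 - γ • Pθ θ) *ᵥ V θ = cθ θ)
    {x : S} (hμ : ∀ a, DifferentiableAt ℝ (fun θ => μ θ x a) θ)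
    (hV : ∀ y, DifferentiableAt ℝ (fun θ => V θ y) θ) :
    ∑ y, (1 - γ • Pθ θ) x y • fderiv ℝ (fun θ => V θ y) θ =
      ∑ a, (c x a + γ * ∑ y, P x a y * V θ y) • fderiv ℝ (fun θ => μ θ x a) θ := by
  have hM := hasFDerivAt_one_sub_smul_apply (γ := γ) hPθ hμ
  have hc : HasFDerivAt (fun θ => cθ θ x) (∑ a, c x a • fderiv ℝ (fun θ => μ θ x a) θ) θ := by
    simp only [hcθ]
    exact hasFDerivAt_sum_mul_const (fun a _ => hμ a) _
  have h := Matrix.fderiv_mulVec_apply (fun y => (hM y).differentiableAt) hV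
  simp only [hbellman, hc.fderiv, (hM _).fderiv] at h
  rw [eq_sub_of_add_eq h.symm]
  simp only [smul_neg, sum_neg_distrib, sub_neg_eq_add, add_smul, sum_add_distrib, add_right_inj,
    smul_sum, mul_sum, sum_smul, smul_smul]
  rw [sum_comm]
  exact sum_congr rfl fun a _ => sum_congr rfl fun y _ => by congr 1; ring

end PolicyGradient

/-- Policy gradient theorem for a finite discounted MDP: the value function
`θ ↦ V^θ(x⁰)` is differentiable and its gradient is
`Σ_k γᵏ Σ_x (P_θᵏ)(x⁰,x) Σ_a ∇_θ μ(a|x;θ) Q^θ(x,a)`, and the same formula holds with the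
action-value function `Q^θ` replaced by the advantage `A^θ(x,a) = Q^θ(x,a) − V^θ(x)`. -/
theorem stmt5 {S A : Type*} [Fintype S] [Fintype A] [DecidableEq S] {κ : ℕ}
    (γ : ℝ) (hγ : γ ∈ Set.Ioo (0 : ℝ) 1)
    (P : S → A → S → ℝ) (hP0 : ∀ x a y, 0 ≤ P x a y) (hP1 : ∀ x a, ∑ y, P x a y = 1)
    (c : S → A → ℝ)
    (μ : (Fin κ → ℝ) → S → A → ℝ)
    (hμdiff : ∀ x a, Differentiable ℝ fun θ => μ θ x a)
    (hμ0 : ∀ θ x a, 0 ≤ μ θ x a) (hμ1 : ∀ θ x, ∑ a, μ θ x a = 1)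
    (Pθ : (Fin κ → ℝ) → Matrix S S ℝ)
    (hPθ : ∀ θ x y, Pθ θ x y = ∑ a, μ θ x a * P x a y)
    (cθ : (Fin κ → ℝ) → S → ℝ)
    (hcθ : ∀ θ x, cθ θ x = ∑ a, μ θ x a * c x a)
    (V : (Fin κ → ℝ) → S → ℝ)
    (hV : ∀ θ, V θ = (1 - γ • Pθ θ)⁻¹.mulVec (cθ θ))
    (Q : (Fin κ → ℝ) → S → A → ℝ)
    (hQ : ∀ θ x a, Q θ x a = c x a + γ * ∑ y, P x a y * V θ y)
    (Adv : (Fin κ → ℝ) → S → A → ℝ)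
    (hAdv : ∀ θ x a, Adv θ x a = Q θ x a - V θ x)
    (x0 : S) (θ : Fin κ → ℝ) :
    DifferentiableAt ℝ (fun θ' => V θ' x0) θ ∧
    fderiv ℝ (fun θ' => V θ' x0) θ =
      ∑' k : ℕ, γ ^ k •
        ∑ x, ((Pθ θ) ^ k) x0 x • ∑ a, Q θ x a • fderiv ℝ (fun θ' => μ θ' x a) θ ∧
    fderiv ℝ (fun θ' => V θ' x0) θ =
      ∑' k : ℕ, γ ^ k •
        ∑ x, ((Pθ θ) ^ k) x0 x • ∑ a, Adv θ x a • fderiv ℝ (fun θ' => μ θ' x a) θ := by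
  obtain ⟨hγ0, hγ1⟩ := hγ
  have hγabs : |γ| < 1 := by rwa [abs_of_pos hγ0]
  have hstoch (θ' : Fin κ → ℝ) : Pθ θ' ∈ Matrix.rowStochastic ℝ S :=
    mem_rowStochastic_of_apply_eq_sum_mul (hPθ θ') (hμ0 θ') (hμ1 θ') hP0 hP1
  have hdet (θ' : Fin κ → ℝ) : IsUnit (1 - γ • Pθ θ').det :=
    (Matrix.isUnit_iff_isUnit_det _).mp
      (Matrix.isUnit_one_sub_smul_of_mem_rowStochastic (hstoch θ') hγabs)
  have hbellman (θ' : Fin κ → ℝ) : (1 - γ • Pθ θ') *ᵥ V θ' = cθ θ' := by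
    rw [hV, Matrix.mulVec_mulVec, Matrix.mul_nonsing_inv _ (hdet θ'), Matrix.one_mulVec]
  have hμθ (x : S) (a : A) : DifferentiableAt ℝ (fun θ' => μ θ' x a) θ := hμdiff x a θ
  have hVθ := differentiableAt_value hPθ hcθ hV hμθ (hdet θ).ne_zero
  have hneumann (x : S) :=
    Matrix.hasSum_pow_mul_pow_apply_of_mem_rowStochastic (hstoch θ) hγabs x0 x
  have hgradQ : fderiv ℝ (fun θ' => V θ' x0) θ =
      ∑' k : ℕ, γ ^ k •
        ∑ x, ((Pθ θ) ^ k) x0 x • ∑ a, Q θ x a • fderiv ℝ (fun θ' => μ θ' x a) θ := by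
    rw [← Matrix.sum_inv_apply_smul_sum_apply_smul (hdet θ)
      (fun y => fderiv ℝ (fun θ' => V θ' y) θ) x0]
    simp only [fderiv_bellman_eq hPθ hcθ hbellman (hμθ _) hVθ, ← hQ]
    have hsum := hasSum_sum fun x (_ : x ∈ univ) => (hneumann x).smul_const
      (∑ a, Q θ x a • fderiv ℝ (fun θ' => μ θ' x a) θ)
    simp only [mul_smul, ← smul_sum] at hsum
    exact hsum.tsum_eq.symm
  have hadv (x : S) : ∑ a, Adv θ x a • fderiv ℝ (fun θ' => μ θ' x a) θ =
      ∑ a, Q θ x a • fderiv ℝ (fun θ' => μ θ' x a) θ := by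
    simp only [hAdv]
    exact sum_sub_smul_fderiv_eq_of_sum_eq_const (fun a _ => hμθ x a) (fun θ' => hμ1 θ' x) _ _
  exact ⟨hVθ x0, hgradQ, by simp only [hadv, hgradQ]⟩
end

section
/- Let S be a finite set, γ ∈ (0,1), Q an S×S row-stochastic matrix (Q(x,y) ≥ 0, Σ_y Q(x,y) = 1), and d : S → ℝ with d(y) ≥ 0 and γ·Σ_{x∈S} d(x)Q(x,y) ≤ d(y) for every y ∈ S. Then for every w : S → ℝ, Σ_{x∈S} d(x)·(γ·Σ_{y∈S} Q(x,y)w(y))² ≤ γ·Σ_{y∈S} d(y)·w(y)². Consequently, for any c : S → ℝ, the operator T[V](x) = c(x) + γ·Σ_y Q(x,y)V(y) satisfies Σ_x d(x)(T[V₁](x) − T[V₂](x))² ≤ γ·Σ_x d(x)(V₁(x) − V₂(x))² for all V₁, V₂ : S → ℝ. -/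
/-- Weighted-norm contraction: if `d ≥ 0` satisfies `γ·(dᵀQ)(y) ≤ d(y)` for a
row-stochastic `Q`, then `Σ_x d(x)(γ Σ_y Q(x,y)w(y))² ≤ γ Σ_y d(y)w(y)²`, and
consequently the affine operator `T[V](x) = c(x) + γ Σ_y Q(x,y)V(y)` is a
`γ`-contraction in the `d`-weighted squared norm. -/
theorem stmt9 {S : Type*} [Fintype S] (γ : ℝ) (hγ : γ ∈ Set.Ioo (0 : ℝ) 1)
    (Q : Matrix S S ℝ) (hQ0 : ∀ x y, 0 ≤ Q x y) (hQ1 : ∀ x, ∑ y, Q x y = 1)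
    (d : S → ℝ) (hd0 : ∀ y, 0 ≤ d y) (hd : ∀ y, γ * ∑ x, d x * Q x y ≤ d y) :
    (∀ w : S → ℝ,
      ∑ x, d x * (γ * ∑ y, Q x y * w y) ^ 2 ≤ γ * ∑ y, d y * w y ^ 2) ∧
    (∀ c V₁ V₂ : S → ℝ,
      ∑ x, d x * ((c x + γ * ∑ y, Q x y * V₁ y) - (c x + γ * ∑ y, Q x y * V₂ y)) ^ 2 ≤
        γ * ∑ x, d x * (V₁ x - V₂ x) ^ 2) := by
  obtain ⟨hγ0, hγ1⟩ := hγ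
  have key : ∀ w : S → ℝ,
      ∑ x, d x * (γ * ∑ y, Q x y * w y) ^ 2 ≤ γ * ∑ y, d y * w y ^ 2 := by
    intro w
    have jensen : ∀ x, (∑ y, Q x y * w y) ^ 2 ≤ ∑ y, Q x y * w y ^ 2 := by
      intro x
      have := Finset.sum_sq_le_sum_mul_sum_of_sq_eq_mul Finset.univ
        (r := fun y => Q x y * w y) (f := fun y => Q x y)
        (g := fun y => Q x y * w y ^ 2)
        (fun y _ => hQ0 x y) (fun y _ => mul_nonneg (hQ0 x y) (sq_nonneg _))
        (fun y _ => by ring)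
      simpa [hQ1 x] using this
    calc ∑ x, d x * (γ * ∑ y, Q x y * w y) ^ 2
        = γ ^ 2 * ∑ x, d x * (∑ y, Q x y * w y) ^ 2 := by
          rw [Finset.mul_sum]; congr 1; ext x; ring
      _ ≤ γ ^ 2 * ∑ x, d x * ∑ y, Q x y * w y ^ 2 := by
          apply mul_le_mul_of_nonneg_left _ (sq_nonneg γ)
          exact Finset.sum_le_sum fun x _ =>
            mul_le_mul_of_nonneg_left (jensen x) (hd0 x)
      _ = γ * ∑ y, (γ * ∑ x, d x * Q x y) * w y ^ 2 := by
          simp only [Finset.mul_sum, Finset.sum_mul]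
          rw [Finset.sum_comm]
          congr 1; ext x; congr 1; ext y; ring
      _ ≤ γ * ∑ y, d y * w y ^ 2 := by
          apply mul_le_mul_of_nonneg_left _ hγ0.le
          exact Finset.sum_le_sum fun y _ =>
            mul_le_mul_of_nonneg_right (hd y) (sq_nonneg _)
  refine ⟨key, fun c V₁ V₂ => ?_⟩
  have h := key (fun y => V₁ y - V₂ y)
  have e : ∀ x, (c x + γ * ∑ y, Q x y * V₁ y) - (c x + γ * ∑ y, Q x y * V₂ y)
      = γ * ∑ y, Q x y * (V₁ y - V₂ y) := by
    intro x
    simp_rw [mul_sub, Finset.sum_sub_distrib, mul_sub]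
    ring
  simp_rw [e]
  exact h
end

section
/- Let H be a real Hilbert space, K a closed subspace of H, Π the orthogonal projection of H onto K, and γ ∈ (0,1). Let T : H → H satisfy ‖T(u) − T(w)‖ ≤ √γ·‖u − w‖ for all u, w ∈ H. Suppose V* ∈ H satisfies T(V*) = V*, and Ṽ ∈ K satisfies Π(T(Ṽ)) = Ṽ. Then ‖V* − Ṽ‖ ≤ ‖V* − Π(V*)‖ / √(1 − γ). -/
/-!
The projection error `V* - Π V*` is orthogonal to `K`, so by Pythagoras
`‖V* - Ṽ‖² = ‖V* - Π V*‖² + ‖Π V* - Ṽ‖²`. Writing `Π V* - Ṽ = Π (T V* - T Ṽ)` and using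
that `Π` is nonexpansive, the second term is at most `γ ‖V* - Ṽ‖²`; absorbing it into the
left-hand side gives `(1 - γ) ‖V* - Ṽ‖² ≤ ‖V* - Π V*‖²`.
-/

namespace Submodule

variable {𝕜 E : Type*} [RCLike 𝕜] [NormedAddCommGroup E] [InnerProductSpace 𝕜 E]

theorem norm_sub_sq_eq_norm_sub_starProjection_sq_add (K : Submodule 𝕜 E)
    [K.HasOrthogonalProjection] (x : E) {v : E} (hv : v ∈ K) :
    ‖x - v‖ ^ 2 = ‖x - K.starProjection x‖ ^ 2 + ‖K.starProjection x - v‖ ^ 2 := by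
  have horth : inner 𝕜 (x - K.starProjection x) (K.starProjection x - v) = 0 :=
    K.starProjection_inner_eq_zero x _ (K.sub_mem (K.starProjection_apply_mem x) hv)
  simpa only [sq, sub_add_sub_cancel] using
    norm_add_sq_eq_norm_sq_add_norm_sq_of_inner_eq_zero _ _ horth

end Submodule

theorem Real.le_div_sqrt_one_sub_of_sq_le_sq_add_mul {a c γ : ℝ} (hγ : γ < 1) (ha : 0 ≤ a)
    (h : c ^ 2 ≤ a ^ 2 + γ * c ^ 2) : c ≤ a / √(1 - γ) := by
  have h1γ : 0 < 1 - γ := sub_pos.mpr hγ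
  rw [le_div_iff₀ (Real.sqrt_pos.mpr h1γ)]
  refine le_of_sq_le_sq ?_ ha
  rw [mul_pow, Real.sq_sqrt h1γ.le]
  linarith

/-- Error bound for the projected fixed point: if `T` is `√γ`-Lipschitz on a real
Hilbert space, `V*` is a fixed point of `T`, and `Ṽ ∈ K` is a fixed point of the
projected operator `Π∘T` (with `Π` the orthogonal projection onto the closed subspace
`K`), then `‖V* − Ṽ‖ ≤ ‖V* − Π V*‖ / √(1 − γ)`. -/
theorem stmt10 {H : Type*} [NormedAddCommGroup H] [InnerProductSpace ℝ H]
    (K : Submodule ℝ H) [CompleteSpace K]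
    (γ : ℝ) (hγ : γ ∈ Set.Ioo (0 : ℝ) 1)
    (T : H → H) (hT : ∀ u w, ‖T u - T w‖ ≤ Real.sqrt γ * ‖u - w‖)
    (Vstar : H) (hfix : T Vstar = Vstar)
    (Vt : H) (hVt : Vt ∈ K)
    (hproj : (K.orthogonalProjectionOnto (T Vt) : H) = Vt) :
    ‖Vstar - Vt‖ ≤ ‖Vstar - (K.orthogonalProjectionOnto Vstar : H)‖ / Real.sqrt (1 - γ) := by
  obtain ⟨hγ0, hγ1⟩ := hγ
  simp only [Submodule.coe_orthogonalProjectionOnto_apply] at hproj ⊢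
  have hcontr : ‖K.starProjection Vstar - Vt‖ ≤ √γ * ‖Vstar - Vt‖ :=
    calc ‖K.starProjection Vstar - Vt‖ = ‖K.starProjection (T Vstar - T Vt)‖ := by
          rw [map_sub, hfix, hproj]
      _ ≤ ‖T Vstar - T Vt‖ := K.norm_starProjection_apply_le _
      _ ≤ √γ * ‖Vstar - Vt‖ := hT _ _
  refine Real.le_div_sqrt_one_sub_of_sq_le_sq_add_mul hγ1 (norm_nonneg _) ?_
  calc ‖Vstar - Vt‖ ^ 2
      = ‖Vstar - K.starProjection Vstar‖ ^ 2 + ‖K.starProjection Vstar - Vt‖ ^ 2 :=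
        K.norm_sub_sq_eq_norm_sub_starProjection_sq_add Vstar hVt
    _ ≤ ‖Vstar - K.starProjection Vstar‖ ^ 2 + (√γ * ‖Vstar - Vt‖) ^ 2 := by gcongr
    _ = ‖Vstar - K.starProjection Vstar‖ ^ 2 + γ * ‖Vstar - Vt‖ ^ 2 := by
        rw [mul_pow, Real.sq_sqrt hγ0.le]
end

section
/- Let S be a finite set, γ ∈ (0,1), Q an S×S row-stochastic matrix, d : S → ℝ with d(y) ≥ 0 and γ·Σ_{x∈S} d(x)Q(x,y) ≤ d(y) for all y ∈ S, and φ : S → ℝ^κ a feature map such that the Gram matrix Σ_{x∈S} d(x)·φ(x)φ(x)ᵀ is positive definite. Define the κ×κ matrix A = Σ_{x∈S} d(x)·φ(x)·(φ(x) − γ·Σ_{y∈S} Q(x,y)φ(y))ᵀ. Then vᵀAv > 0 for every nonzero v ∈ ℝ^κ. -/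
/-!
Write `f = Φ v` for the value function of `v`, where `Φ` is the feature matrix, and
`⟨g, h⟩_d = ∑ₓ d x g x h x`. Then `vᵀ A v = ‖f‖²_d - γ ⟨f, Q f⟩_d`. Jensen's inequality for the
stochastic rows of `Q` gives `(Q f)² ≤ Q (f²)`, and the hypothesis `γ dᵀ Q ≤ d` turns this into
`γ ‖Q f‖²_d ≤ ‖f‖²_d`. With `2 ⟨f, Q f⟩_d ≤ ‖f‖²_d + ‖Q f‖²_d` this yields
`vᵀ A v ≥ (1 - γ) / 2 · ‖f‖²_d = (1 - γ) / 2 · vᵀ G v > 0`, `G` being the Gram matrix.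
-/

open Matrix

lemma dotProduct_mulVec_eq_sum_mul_dotProduct {S ι : Type*} [Fintype S] [Fintype ι] (d : S → ℝ)
    (a b : S → ι → ℝ) (M : Matrix ι ι ℝ) (hM : ∀ i j, M i j = ∑ x, d x * (a x i * b x j))
    (v : ι → ℝ) : v ⬝ᵥ M *ᵥ v = ∑ x, d x * ((a x ⬝ᵥ v) * (b x ⬝ᵥ v)) := by
  simp only [dotProduct, mulVec, hM, Finset.mul_sum, Finset.sum_mul]
  calc _ = ∑ i, ∑ x, ∑ j, v i * (d x * (a x i * b x j) * v j) :=
        Finset.sum_congr rfl fun _ _ => Finset.sum_comm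
    _ = _ := Finset.sum_comm.trans <| Finset.sum_congr rfl fun _ _ => Finset.sum_comm.trans <|
        Finset.sum_congr rfl fun _ _ => Finset.sum_congr rfl fun _ _ => by ring

section StochasticMatrix

variable {S : Type*} [Fintype S] {Q : Matrix S S ℝ}

lemma sq_mulVec_apply_le_mulVec_sq_apply (hQ0 : ∀ x y, 0 ≤ Q x y) (hQ1 : ∀ x, ∑ y, Q x y = 1)
    (f : S → ℝ) (x : S) : (Q *ᵥ f) x ^ 2 ≤ (Q *ᵥ f ^ 2) x :=
  (even_two.convexOn_pow (𝕜 := ℝ)).map_sum_le (fun y _ => hQ0 x y) (hQ1 x)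
    (fun _ _ => Set.mem_univ _)

lemma mul_sum_mul_mulVec_le_sum_mul {d : S → ℝ} {γ : ℝ} (hd : ∀ y, γ * ∑ x, d x * Q x y ≤ d y)
    {F : S → ℝ} (hF : 0 ≤ F) : γ * ∑ x, d x * (Q *ᵥ F) x ≤ ∑ x, d x * F x := by
  have h := Matrix.dotProduct_mulVec d Q F
  simp only [dotProduct, vecMul] at h
  rw [h, Finset.mul_sum]
  exact Finset.sum_le_sum fun y _ => by
    rw [← mul_assoc]; exact mul_le_mul_of_nonneg_right (hd y) (hF y)

theorem td_quadratic_form_lower_bound {d : S → ℝ} {γ : ℝ} (hγ : 0 ≤ γ)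
    (hQ0 : ∀ x y, 0 ≤ Q x y) (hQ1 : ∀ x, ∑ y, Q x y = 1) (hd0 : ∀ y, 0 ≤ d y)
    (hd : ∀ y, γ * ∑ x, d x * Q x y ≤ d y) (f : S → ℝ) :
    (1 - γ) / 2 * ∑ x, d x * f x ^ 2 ≤ ∑ x, d x * (f x * (f x - γ * (Q *ᵥ f) x)) := by
  set g := Q *ᵥ f
  have h_amgm : 2 * ∑ x, d x * (f x * g x) ≤ ∑ x, d x * f x ^ 2 + ∑ x, d x * (Q *ᵥ f ^ 2) x := by
    rw [Finset.mul_sum, ← Finset.sum_add_distrib]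
    refine Finset.sum_le_sum fun x _ => ?_
    have := sq_mulVec_apply_le_mulVec_sq_apply hQ0 hQ1 f x
    nlinarith [two_mul_le_add_sq (f x) (g x), hd0 x]
  have h_contract := mul_sum_mul_mulVec_le_sum_mul hd (F := f ^ 2) (fun x => sq_nonneg (f x))
  simp only [Pi.pow_apply] at h_contract
  have h_expand : ∑ x, d x * (f x * (f x - γ * g x))
      = ∑ x, d x * f x ^ 2 - γ * ∑ x, d x * (f x * g x) := by
    rw [Finset.mul_sum, ← Finset.sum_sub_distrib]
    exact Finset.sum_congr rfl fun x _ => by ring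
  rw [h_expand]
  linarith [mul_le_mul_of_nonneg_left h_amgm hγ]

end StochasticMatrix

/-- Positivity of the TD(0) matrix: with `Q` row-stochastic, `d ≥ 0` satisfying
`γ·(dᵀQ)(y) ≤ d(y)`, and features `φ` whose `d`-weighted Gram matrix is positive
definite, the matrix `A = Σ_x d(x)·φ(x)(φ(x) − γ Σ_y Q(x,y)φ(y))ᵀ` satisfies
`vᵀAv > 0` for every nonzero `v`. -/
theorem stmt11 {S : Type*} [Fintype S] {κ : ℕ} (γ : ℝ) (hγ : γ ∈ Set.Ioo (0 : ℝ) 1)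
    (Q : Matrix S S ℝ) (hQ0 : ∀ x y, 0 ≤ Q x y) (hQ1 : ∀ x, ∑ y, Q x y = 1)
    (d : S → ℝ) (hd0 : ∀ y, 0 ≤ d y) (hd : ∀ y, γ * ∑ x, d x * Q x y ≤ d y)
    (φ : S → Fin κ → ℝ)
    (hgram : (Matrix.of fun i j => ∑ x, d x * (φ x i * φ x j)).PosDef)
    (A : Matrix (Fin κ) (Fin κ) ℝ)
    (hA : ∀ i j, A i j = ∑ x, d x * (φ x i * (φ x j - γ * ∑ y, Q x y * φ y j))) :
    ∀ v : Fin κ → ℝ, v ≠ 0 → 0 < v ⬝ᵥ A.mulVec v := by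
  intro v hv
  have h_gram : 0 < ∑ x, d x * (of φ *ᵥ v) x ^ 2 := by
    have := hgram.dotProduct_mulVec_pos hv
    rw [star_trivial, dotProduct_mulVec_eq_sum_mul_dotProduct d φ φ
      (of fun i j => ∑ x, d x * (φ x i * φ x j)) (fun _ _ => rfl)] at this
    simp only [sq]
    exact this
  have h_form : v ⬝ᵥ A *ᵥ v
      = ∑ x, d x * ((of φ *ᵥ v) x * ((of φ *ᵥ v) x - γ * (Q *ᵥ of φ *ᵥ v) x)) := by
    rw [dotProduct_mulVec_eq_sum_mul_dotProduct d φ (of φ - γ • (Q * of φ)) A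
      (by simpa [mul_apply] using hA) v]
    refine Finset.sum_congr rfl fun x _ => ?_
    change d x * ((of φ *ᵥ v) x * ((of φ - γ • (Q * of φ)) *ᵥ v) x) = _
    rw [sub_mulVec, smul_mulVec, ← mulVec_mulVec]
    rfl
  rw [h_form]
  exact (mul_pos (by linarith [hγ.2]) h_gram).trans_le
    (td_quadratic_form_lower_bound hγ.1.le hQ0 hQ1 hd0 hd (of φ *ᵥ v))
end

section
/- Let S and A be finite sets, γ ∈ (0,1), P : S × A × S → ℝ with P(y|x,a) ≥ 0 and Σ_y P(y|x,a) = 1, c : S × A → ℝ, and π : S × A → ℝ a policy with π(a|x) ≥ 0 and Σ_a π(a|x) = 1. Let d : S → ℝ satisfy d(x) ≥ 0, Σ_x d(x) = 1, and γ·Σ_{x,a} d(x)π(a|x)P(y|x,a) ≤ d(y) for all y. For any V, W : S → ℝ define Q_V(x,a) = c(x,a) + γ·Σ_y P(y|x,a)V(y), A_V(x,a) = Q_V(x,a) − V(x), and analogously Q_W, A_W. Then |Σ_{x,a} d(x)π(a|x)·(A_V(x,a) − A_W(x,a))| ≤ (1 + √γ)·√(Σ_y d(y)·(V(y) − W(y))²).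 -/
lemma aux_cs {ι : Type*} [Fintype ι] (w f : ι → ℝ) (hw : ∀ i, 0 ≤ w i) :
    |∑ i, w i * f i| ≤ Real.sqrt (∑ i, w i) * Real.sqrt (∑ i, w i * f i ^ 2) := by
  have h : (∑ i, w i * f i) ^ 2 ≤ (∑ i, w i) * (∑ i, w i * f i ^ 2) := by
    have h2 := Finset.sum_mul_sq_le_sq_mul_sq Finset.univ
      (fun i => Real.sqrt (w i)) (fun i => Real.sqrt (w i) * f i)
    calc (∑ i, w i * f i) ^ 2
        = (∑ i, Real.sqrt (w i) * (Real.sqrt (w i) * f i)) ^ 2 := by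
          congr 1; apply Finset.sum_congr rfl; intro i _
          rw [← mul_assoc, Real.mul_self_sqrt (hw i)]
      _ ≤ (∑ i, Real.sqrt (w i) ^ 2) * ∑ i, (Real.sqrt (w i) * f i) ^ 2 := h2
      _ = (∑ i, w i) * (∑ i, w i * f i ^ 2) := by
          congr 1 <;> apply Finset.sum_congr rfl <;> intro i _
          · exact Real.sq_sqrt (hw i)
          · rw [mul_pow, Real.sq_sqrt (hw i)]
  calc |∑ i, w i * f i| = Real.sqrt ((∑ i, w i * f i) ^ 2) := (Real.sqrt_sq_eq_abs _).symm
    _ ≤ Real.sqrt ((∑ i, w i) * (∑ i, w i * f i ^ 2)) := Real.sqrt_le_sqrt h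
    _ = _ := Real.sqrt_mul (Finset.sum_nonneg fun i _ => hw i) _

/-- Bound on the policy-gradient estimation error from value-function approximation:
for advantages `A_V(x,a) = c(x,a) + γ Σ_y P(y|x,a)V(y) − V(x)` induced by value
estimates `V` and `W`, and an occupation-type weight `d`,
`|Σ_{x,a} d(x)π(a|x)(A_V(x,a) − A_W(x,a))| ≤ (1 + √γ)·√(Σ_y d(y)(V(y) − W(y))²)`. -/
theorem stmt15 {S A : Type*} [Fintype S] [Fintype A]
    (γ : ℝ) (hγ : γ ∈ Set.Ioo (0 : ℝ) 1)
    (P : S → A → S → ℝ) (hP0 : ∀ x a y, 0 ≤ P x a y) (hP1 : ∀ x a, ∑ y, P x a y = 1)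
    (c : S → A → ℝ)
    (π : S → A → ℝ) (hπ0 : ∀ x a, 0 ≤ π x a) (hπ1 : ∀ x, ∑ a, π x a = 1)
    (d : S → ℝ) (hd0 : ∀ x, 0 ≤ d x) (hd1 : ∑ x, d x = 1)
    (hd : ∀ y, γ * ∑ x, ∑ a, d x * π x a * P x a y ≤ d y)
    (V W : S → ℝ) :
    |∑ x, ∑ a, d x * π x a *
        (((c x a + γ * ∑ y, P x a y * V y) - V x) -
          ((c x a + γ * ∑ y, P x a y * W y) - W x))| ≤
      (1 + Real.sqrt γ) * Real.sqrt (∑ y, d y * (V y - W y) ^ 2) := by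
  obtain ⟨hγ0, hγ1⟩ := hγ
  set f : S → ℝ := fun x => V x - W x with hf
  set m : S → ℝ := fun y => γ * ∑ x, ∑ a, d x * π x a * P x a y with hm
  -- per-term simplification
  have h1 : ∀ x a, ((c x a + γ * ∑ y, P x a y * V y) - V x) -
      ((c x a + γ * ∑ y, P x a y * W y) - W x) = γ * (∑ y, P x a y * f y) - f x := by
    intro x a
    have : ∑ y, P x a y * f y = (∑ y, P x a y * V y) - ∑ y, P x a y * W y := by
      rw [← Finset.sum_sub_distrib]
      exact Finset.sum_congr rfl fun y _ => by simp [hf]; ring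
    rw [this]; simp [hf]; ring
  have key : (∑ x, ∑ a, d x * π x a *
        (((c x a + γ * ∑ y, P x a y * V y) - V x) -
          ((c x a + γ * ∑ y, P x a y * W y) - W x)))
      = (∑ y, m y * f y) - ∑ x, d x * f x := by
    have step1 : ∀ x a, d x * π x a *
        (((c x a + γ * ∑ y, P x a y * V y) - V x) -
          ((c x a + γ * ∑ y, P x a y * W y) - W x))
        = (∑ y, γ * (d x * π x a * P x a y * f y)) - d x * π x a * f x := by
      intro x a
      rw [h1, mul_sub]
      congr 1
      rw [Finset.mul_sum, Finset.mul_sum]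
      exact Finset.sum_congr rfl fun y _ => by ring
    calc (∑ x, ∑ a, d x * π x a *
        (((c x a + γ * ∑ y, P x a y * V y) - V x) -
          ((c x a + γ * ∑ y, P x a y * W y) - W x)))
        = ∑ x, ∑ a, ((∑ y, γ * (d x * π x a * P x a y * f y)) - d x * π x a * f x) := by
          exact Finset.sum_congr rfl fun x _ => Finset.sum_congr rfl fun a _ => step1 x a
      _ = (∑ x, ∑ a, ∑ y, γ * (d x * π x a * P x a y * f y)) - ∑ x, ∑ a, d x * π x a * f x := by
          rw [← Finset.sum_sub_distrib]
          exact Finset.sum_congr rfl fun x _ => by rw [← Finset.sum_sub_distrib]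
      _ = (∑ y, m y * f y) - ∑ x, d x * f x := by
          congr 1
          · calc (∑ x, ∑ a, ∑ y, γ * (d x * π x a * P x a y * f y))
                = ∑ x, ∑ y, ∑ a, γ * (d x * π x a * P x a y * f y) :=
                  Finset.sum_congr rfl fun x _ => Finset.sum_comm
              _ = ∑ y, ∑ x, ∑ a, γ * (d x * π x a * P x a y * f y) := Finset.sum_comm
              _ = ∑ y, m y * f y := by
                  apply Finset.sum_congr rfl; intro y _
                  calc ∑ x, ∑ a, γ * (d x * π x a * P x a y * f y)
                      = ∑ x, ∑ a, (d x * π x a * P x a y) * (γ * f y) :=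
                        Finset.sum_congr rfl fun x _ => Finset.sum_congr rfl fun a _ => by ring
                    _ = (∑ x, ∑ a, d x * π x a * P x a y) * (γ * f y) := by
                        rw [Finset.sum_mul]
                        exact Finset.sum_congr rfl fun x _ => by rw [Finset.sum_mul]
                    _ = m y * f y := by rw [hm]; ring
          · apply Finset.sum_congr rfl; intro x _
            rw [← Finset.sum_mul, ← Finset.mul_sum, hπ1, mul_one]
  have hm0 : ∀ y, 0 ≤ m y := by
    intro y
    exact mul_nonneg hγ0.le (Finset.sum_nonneg fun x _ => Finset.sum_nonneg fun a _ =>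
      mul_nonneg (mul_nonneg (hd0 x) (hπ0 x a)) (hP0 x a y))
  have hmsum : ∑ y, m y = γ := by
    rw [hm, ← Finset.mul_sum]
    rw [Finset.sum_comm]
    have : ∀ x, ∑ y, ∑ a, d x * π x a * P x a y = d x := by
      intro x
      rw [Finset.sum_comm]
      have : ∀ a, ∑ y, d x * π x a * P x a y = d x * π x a := by
        intro a; rw [← Finset.mul_sum, hP1, mul_one]
      rw [Finset.sum_congr rfl fun a _ => this a, ← Finset.mul_sum, hπ1, mul_one]
    rw [Finset.sum_congr rfl fun x _ => this x, hd1, mul_one]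
  have hmf : ∑ y, m y * f y ^ 2 ≤ ∑ y, d y * f y ^ 2 :=
    Finset.sum_le_sum fun y _ => mul_le_mul_of_nonneg_right (hd y) (sq_nonneg _)
  have hsq : Real.sqrt (∑ y, m y * f y ^ 2) ≤ Real.sqrt (∑ y, d y * f y ^ 2) :=
    Real.sqrt_le_sqrt hmf
  have b1 : |∑ y, m y * f y| ≤ Real.sqrt γ * Real.sqrt (∑ y, d y * f y ^ 2) := by
    calc |∑ y, m y * f y| ≤ Real.sqrt (∑ y, m y) * Real.sqrt (∑ y, m y * f y ^ 2) :=
          aux_cs m f hm0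
      _ ≤ Real.sqrt γ * Real.sqrt (∑ y, d y * f y ^ 2) := by
          rw [hmsum]; exact mul_le_mul_of_nonneg_left hsq (Real.sqrt_nonneg _)
  have b2 : |∑ x, d x * f x| ≤ Real.sqrt (∑ y, d y * f y ^ 2) := by
    have := aux_cs d f hd0
    rwa [hd1, Real.sqrt_one, one_mul] at this
  rw [key]
  calc |(∑ y, m y * f y) - ∑ x, d x * f x| ≤ |∑ y, m y * f y| + |∑ x, d x * f x| :=
        abs_sub _ _
    _ ≤ Real.sqrt γ * Real.sqrt (∑ y, d y * f y ^ 2) + Real.sqrt (∑ y, d y * f y ^ 2) :=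
        add_le_add b1 b2
    _ = (1 + Real.sqrt γ) * Real.sqrt (∑ y, d y * (V y - W y) ^ 2) := by
        simp only [hf]; ring
end
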